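/- arXiv:1203.2587 — 2 statements merged into one kernel-verified Lean document; each statement's English description precedes it below -/
import Mathlib

section
/- Let X be a nonnegative continuous martingale with X_0 = 1 a.s., stopped at 0. For 1 < a < b, let T_a, T_b, T_0 denote the respective first hitting times and suppose P(T_b ∧ T_0 < ∞) = 1. Then the measures P(· | T_b ≤ T_0) and P(· | T_a ≤ T_0) agree on the σ-algebra F_{T_a ∧ T_0}; that is, the family {P(· | T_a ≤ T_0)}_{a>1} is consistent. -/
open MeasureTheory ProbabilityTheory
open scoped Classical

/-- First hitting time of level `c` by the process `X` (value `⊤` if `c` is never hit). -/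
noncomputable def hitT {Ω : Type*} (X : NNReal → Ω → ℝ) (c : ℝ) (ω : Ω) : ENNReal :=
  sInf {t : ENNReal | ∃ u : NNReal, (u : ENNReal) = t ∧ X u ω = c}

/-- The process `X` stopped at `T_a ∧ T_0`, as a path-valued map. -/
noncomputable def stoppedPath {Ω : Type*} (X : NNReal → Ω → ℝ) (a : ℝ) (ω : Ω) :
    NNReal → ℝ := fun t =>
  if (t : ENNReal) ≤ min (hitT X a ω) (hitT X 0 ω) then X t ω
  else X (min (hitT X a ω) (hitT X 0 ω)).toNNReal ω


section Path
variable {Ω : Type*} {X : NNReal → Ω → ℝ} {c : ℝ} {ω : Ω}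

lemma hitT_le_of_eq {s : NNReal} (h : X s ω = c) : hitT X c ω ≤ s :=
  sInf_le ⟨s, rfl, h⟩

lemma hitT_attained (hc : Continuous fun t => X t ω) (h : hitT X c ω ≠ ⊤) :
    ∃ s : NNReal, (s : ENNReal) = hitT X c ω ∧ X s ω = c := by
  classical
  have himg : {t : ENNReal | ∃ u : NNReal, (u : ENNReal) = t ∧ X u ω = c}
      = (fun u : NNReal => (u : ENNReal)) '' {u : NNReal | X u ω = c} := by
    ext t; simp [Set.mem_image, and_comm, eq_comm]
  set S : Set NNReal := {u : NNReal | X u ω = c} with hS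
  have hSne : S.Nonempty := by
    by_contra hne
    rw [Set.not_nonempty_iff_eq_empty] at hne
    apply h
    rw [hitT, himg, hne]
    simp
  have hSclosed : IsClosed S := isClosed_eq hc continuous_const
  have hmem : sInf S ∈ S := hSclosed.csInf_mem hSne (OrderBot.bddBelow S)
  refine ⟨sInf S, ?_, hmem⟩
  rw [hitT, himg]
  apply le_antisymm
  · refine le_sInf fun t ht => ?_
    obtain ⟨u, hu, rfl⟩ := ht
    exact ENNReal.coe_le_coe.2 (csInf_le (OrderBot.bddBelow S) hu)
  · exact sInf_le ⟨sInf S, hmem, rfl⟩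

lemma hitT_le_coe_iff (hc : Continuous fun t => X t ω) {t : NNReal} :
    hitT X c ω ≤ (t : ENNReal) ↔ ∃ s : NNReal, s ≤ t ∧ X s ω = c := by
  constructor
  · intro h
    have hne : hitT X c ω ≠ ⊤ := fun he => by simp [he] at h
    obtain ⟨s, hs, hXs⟩ := hitT_attained hc hne
    exact ⟨s, by exact_mod_cast hs ▸ h, hXs⟩
  · rintro ⟨s, hst, hXs⟩
    exact (hitT_le_of_eq hXs).trans (by exact_mod_cast hst)

end Path

section Path2
variable {Ω : Type*} {X : NNReal → Ω → ℝ} {c : ℝ} {ω : Ω}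

lemma exists_hit_of_le (hc : Continuous fun t => X t ω) {t : NNReal}
    (h0 : X 0 ω ≤ c) (ht : c ≤ X t ω) : ∃ s : NNReal, s ≤ t ∧ X s ω = c := by
  have := intermediate_value_Icc (zero_le (a := t)) (hc.continuousOn (s := Set.Icc 0 t))
  obtain ⟨s, hs, hXs⟩ := this ⟨h0, ht⟩
  exact ⟨s, hs.2, hXs⟩

/-- Before the hitting time of `c > X 0`, the path stays `≤ c`. -/
lemma le_of_le_hitT (hc : Continuous fun t => X t ω) (h0 : X 0 ω ≤ c) {t : NNReal}
    (h : (t : ENNReal) ≤ hitT X c ω) : X t ω ≤ c := by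
  by_contra hlt
  push_neg at hlt
  obtain ⟨s, hst, hXs⟩ := exists_hit_of_le hc h0 hlt.le
  have h1 : hitT X c ω ≤ (s : ENNReal) := hitT_le_of_eq hXs
  have h2 : (s : ENNReal) = t := le_antisymm (by exact_mod_cast hst) (h.trans h1)
  have : s = t := by exact_mod_cast h2
  rw [this] at hXs
  exact absurd hXs (ne_of_gt hlt)

/-- If `X 0 < c < d` then `T_c ≤ T_d`. -/
lemma hitT_mono_level (hc : Continuous fun t => X t ω) {d : ℝ}
    (h0 : X 0 ω ≤ c) (hcd : c ≤ d) : hitT X c ω ≤ hitT X d ω := by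
  rcases eq_or_ne (hitT X d ω) ⊤ with h | h
  · simp [h]
  obtain ⟨s, hs, hXs⟩ := hitT_attained hc h
  obtain ⟨u, hu, hXu⟩ := exists_hit_of_le hc h0 (hXs ▸ hcd)
  calc hitT X c ω ≤ (u : ENNReal) := hitT_le_of_eq hXu
    _ ≤ (s : ENNReal) := by exact_mod_cast hu
    _ = hitT X d ω := hs

end Path2

section Meas
variable {Ω : Type*} {m : MeasurableSpace Ω} {ℱ : Filtration NNReal m} {X : NNReal → Ω → ℝ}

/-- The event of hitting level `c` by time `t` is `ℱ t`-measurable. -/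
lemma measurableSet_hit_event (hadp : StronglyAdapted ℱ X)
    (hcont : ∀ ω, Continuous fun t => X t ω) (c : ℝ) (t : NNReal) :
    MeasurableSet[ℱ t] {ω | ∃ s : NNReal, s ≤ t ∧ X s ω = c} := by
  classical
  set I := {q : ℚ // 0 ≤ q ∧ (q : ℝ) ≤ (t : ℝ)} with hI
  have hmeasX : ∀ s : NNReal, s ≤ t → Measurable[ℱ t] fun ω => (‖X s ω - c‖₊ : ENNReal) := by
    intro s hs
    have h1 : Measurable[ℱ t] fun ω => X s ω := ((hadp s).mono (ℱ.mono hs)).measurable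
    have h2 : Measurable[ℱ t] fun ω => X s ω - c := h1.sub measurable_const
    exact @Measurable.coe_nnreal_ennreal Ω (ℱ t) _ (@Measurable.nnnorm ℝ Ω _ _ _ (ℱ t) _ h2)
  set g : Ω → ENNReal := fun ω =>
    min (⨅ q : I, (‖X (Real.toNNReal (q : ℚ)) ω - c‖₊ : ENNReal)) (‖X t ω - c‖₊) with hg
  have hqmem : ∀ q : I, Real.toNNReal (q : ℚ) ≤ t := by
    rintro ⟨q, hq0, hqt⟩
    simpa [Real.toNNReal_le_iff_le_coe] using hqt
  have hgmeas : Measurable[ℱ t] g := by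
    have h1 : Measurable[ℱ t] fun ω => ⨅ q : I, (‖X (Real.toNNReal (q : ℚ)) ω - c‖₊ : ENNReal) :=
      Measurable.iInf fun q => hmeasX _ (hqmem q)
    exact h1.min (hmeasX t le_rfl)
  have hset : {ω | ∃ s : NNReal, s ≤ t ∧ X s ω = c} = g ⁻¹' {0} := by
    ext ω
    simp only [Set.mem_setOf_eq, Set.mem_preimage, Set.mem_singleton_iff]
    constructor
    · rintro ⟨s, hst, hXs⟩
      -- show min (iInf ...) ... = 0 : show iInf = 0 by approximating s by rationals
      have hiInf : (⨅ q : I, (‖X (Real.toNNReal (q : ℚ)) ω - c‖₊ : ENNReal)) = 0 := by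
        refine le_antisymm ?_ zero_le
        refine ENNReal.le_of_forall_pos_le_add fun ε hε _ => ?_
        rw [zero_add]
        -- find a rational index whose value is < ε
        have hcont' : ContinuousAt (fun u : NNReal => X u ω) s := (hcont ω).continuousAt
        rw [Metric.continuousAt_iff] at hcont'
        obtain ⟨δ, hδ, hball⟩ := hcont' ε (by exact_mod_cast hε)
        -- pick a rational q with (s:ℝ) - δ < q < (s:ℝ), then max q 0
        obtain ⟨q, hq1, hq2⟩ := exists_rat_btwn (show (s : ℝ) - δ < (s : ℝ) by linarith)
        set q' : ℚ := max q 0 with hq'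
        have hq'0 : (0 : ℚ) ≤ q' := le_max_right _ _
        have hq'le : (q' : ℝ) ≤ (s : ℝ) := by
          rw [hq']
          push_cast
          exact max_le hq2.le s.coe_nonneg
        have hq't : (q' : ℝ) ≤ (t : ℝ) := hq'le.trans (by exact_mod_cast hst)
        have hdist : dist (Real.toNNReal (q' : ℚ)) s < δ := by
          rw [NNReal.dist_eq, Real.coe_toNNReal _ (by exact_mod_cast hq'0)]
          rw [abs_sub_lt_iff]
          constructor
          · linarith
          · have : (s : ℝ) - δ < (q' : ℝ) := by
              rw [hq']; push_cast
              rcases le_or_gt 0 q with h | h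
              · exact lt_of_lt_of_le hq1 (by exact_mod_cast le_max_left q 0)
              · have : (s : ℝ) - δ < 0 := lt_trans hq1 (by exact_mod_cast h)
                calc (s:ℝ) - δ < 0 := this
                  _ ≤ max (q:ℝ) 0 := le_max_right _ _
            linarith
        have hval : ‖X (Real.toNNReal (q' : ℚ)) ω - c‖ < ε := by
          have := hball hdist
          rw [Real.dist_eq] at this
          rw [← hXs]
          simpa [Real.norm_eq_abs] using this
        have hindex : (0:ℚ) ≤ q' ∧ ((q' : ℚ) : ℝ) ≤ (t : ℝ) := ⟨hq'0, hq't⟩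
        refine le_trans (iInf_le _ (⟨q', hindex⟩ : I)) ?_
        rw [ENNReal.coe_le_coe, ← NNReal.coe_le_coe, coe_nnnorm]
        exact hval.le
      simp [hg, hiInf]
    · intro hg0
      -- min = 0: either the endpoint works or use compactness to find the minimizer
      have hmin : (⨅ q : I, (‖X (Real.toNNReal (q : ℚ)) ω - c‖₊ : ENNReal)) = 0 ∨
          (‖X t ω - c‖₊ : ENNReal) = 0 := by
        rcases min_eq_iff.1 hg0 with ⟨h, _⟩ | ⟨h, _⟩
        · exact Or.inl h
        · exact Or.inr h
      rcases hmin with h | h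
      · -- compactness: minimize |X · ω - c| on Icc 0 t
        have hK : IsCompact (Set.Icc (0:NNReal) t) := isCompact_Icc
        have hKne : (Set.Icc (0:NNReal) t).Nonempty := ⟨0, le_refl 0, zero_le (a := t)⟩
        obtain ⟨s, hsK, hsmin⟩ := hK.exists_isMinOn hKne
          (((hcont ω).sub continuous_const).norm.continuousOn)
        refine ⟨s, hsK.2, ?_⟩
        by_contra hne
        have hpos : 0 < ‖X s ω - c‖ := by
          simpa [norm_pos_iff, sub_eq_zero] using hne
        have hlow : ∀ q : I, (‖X s ω - c‖₊ : ENNReal) ≤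
            (‖X (Real.toNNReal (q : ℚ)) ω - c‖₊ : ENNReal) := by
          intro q
          have hmem : Real.toNNReal (q : ℚ) ∈ Set.Icc (0:NNReal) t := ⟨zero_le, hqmem q⟩
          have h3 := (isMinOn_iff.1 hsmin) _ hmem
          rw [ENNReal.coe_le_coe, ← NNReal.coe_le_coe, coe_nnnorm, coe_nnnorm]
          exact h3
        have : (‖X s ω - c‖₊ : ENNReal) ≤ 0 := h ▸ le_iInf hlow
        simp only [nonpos_iff_eq_zero, ENNReal.coe_eq_zero, nnnorm_eq_zero] at this
        exact hne (by linarith [sub_eq_zero.1 this])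
      · refine ⟨t, le_rfl, ?_⟩
        simpa [sub_eq_zero] using h
  rw [hset]
  exact hgmeas (measurableSet_singleton 0)

end Meas

section Key
open Filter Topology

variable {Ω : Type*} {m : MeasurableSpace Ω} {μ : Measure Ω}
  [IsProbabilityMeasure μ] {ℱ : Filtration NNReal m} {X : NNReal → Ω → ℝ}

/-- Optional sampling: for a bounded stopping time `σ ≤ n` with a.e. bounded stopped value,
the set integral of the stopped value over a set in the stopping σ-algebra equals that
of `X n`. -/
lemma optional_sampling_aux (hmart : Martingale X ℱ μ)
    (hcont : ∀ ω, Continuous fun t => X t ω)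
    {σ : Ω → NNReal} (hσ : IsStoppingTime ℱ (fun ω => (σ ω : WithTop NNReal))) {n : NNReal} (hle : ∀ ω, σ ω ≤ n)
    {C : ℝ} (hbdd : ∀ᵐ ω ∂μ, |X (σ ω) ω| ≤ C)
    {A : Set Ω} (hA : MeasurableSet[hσ.measurableSpace] A) :
    ∫ ω in A, X (σ ω) ω ∂μ = ∫ ω in A, X n ω ∂μ := by
  classical
  have hprog : ProgMeasurable ℱ X := hmart.stronglyAdapted.progMeasurable_of_continuous hcont
  have h2pow : ∀ k : ℕ, ((2 : NNReal) ^ k) ≠ 0 := fun k => by positivity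
  set σk : ℕ → Ω → NNReal := fun k ω =>
    min n ((⌈(σ ω) * (2:NNReal)^k⌉₊ : NNReal) / 2^k) with hσk
  have h_le_σk : ∀ k ω, σ ω ≤ σk k ω := by
    intro k ω
    refine le_min (hle ω) ?_
    rw [le_div_iff₀ (pos_iff_ne_zero.2 (h2pow k))]
    exact_mod_cast Nat.le_ceil _
  have h_σk_le : ∀ k ω, σk k ω ≤ n := fun k ω => min_le_left _ _
  have hst : ∀ k, IsStoppingTime ℱ (fun ω => (σk k ω : WithTop NNReal)) := by
    intro k t
    simp only [WithTop.coe_le_coe]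
    by_cases hnt : n ≤ t
    · have : {ω | σk k ω ≤ t} = Set.univ :=
        Set.eq_univ_of_forall fun ω => (h_σk_le k ω).trans hnt
      rw [this]; exact MeasurableSet.univ
    · have hset : {ω | σk k ω ≤ t} = {ω | σ ω ≤ ((⌊t * 2^k⌋₊ : NNReal) / 2^k : NNReal)} := by
        ext ω
        simp only [Set.mem_setOf_eq, hσk, min_le_iff, or_iff_right hnt]
        rw [div_le_iff₀ (pos_iff_ne_zero.2 (h2pow k)), le_div_iff₀ (pos_iff_ne_zero.2 (h2pow k))]
        constructor
        · intro h
          have h1 : (⌈σ ω * 2^k⌉₊ : ℕ) ≤ ⌊t * 2^k⌋₊ := by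
            rw [Nat.le_floor_iff zero_le]
            exact h
          exact le_trans (Nat.le_ceil _) (by exact_mod_cast h1)
        · intro h
          have h1 : (⌈σ ω * 2^k⌉₊ : ℕ) ≤ ⌊t * 2^k⌋₊ := by
            rw [Nat.ceil_le]
            exact h
          calc (⌈σ ω * 2^k⌉₊ : NNReal) ≤ (⌊t * 2^k⌋₊ : NNReal) := by exact_mod_cast h1
            _ ≤ t * 2^k := Nat.floor_le zero_le
      rw [hset]
      have hfl : ((⌊t * 2^k⌋₊ : NNReal) / 2^k : NNReal) ≤ t := by
        rw [div_le_iff₀ (pos_iff_ne_zero.2 (h2pow k))]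
        exact Nat.floor_le zero_le
      exact ℱ.mono hfl _ (by simpa only [WithTop.coe_le_coe] using hσ ((⌊t * 2^k⌋₊ : NNReal) / 2^k))
  have hcr : ∀ k, (Set.range (σk k)).Countable := by
    intro k
    refine Set.Countable.mono ?_ (Set.countable_range fun j : ℕ => min n ((j : NNReal) / 2^k))
    rintro _ ⟨ω, rfl⟩
    exact ⟨⌈(σ ω) * (2:NNReal)^k⌉₊, rfl⟩
  have h_tend : ∀ ω, Tendsto (fun k => σk k ω) atTop (𝓝 (σ ω)) := by
    intro ω
    rw [← NNReal.tendsto_coe]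
    have hup : ∀ k, ((σk k ω : NNReal) : ℝ) ≤ (σ ω : ℝ) + ((2:ℝ)^k)⁻¹ := by
      intro k
      have h1 : σk k ω ≤ (⌈(σ ω) * (2:NNReal)^k⌉₊ : NNReal) / 2^k := min_le_right _ _
      have h2 : ((⌈(σ ω) * (2:NNReal)^k⌉₊ : NNReal) : ℝ) ≤ (σ ω : ℝ) * 2^k + 1 := by
        have := Nat.ceil_lt_add_one (zero_le (a := (σ ω) * (2:NNReal)^k))
        have h3 : ((⌈(σ ω) * (2:NNReal)^k⌉₊ : NNReal)) ≤ (σ ω) * 2^k + 1 := this.le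
        exact_mod_cast h3
      have h4 : ((σk k ω : NNReal) : ℝ) ≤ ((⌈(σ ω) * (2:NNReal)^k⌉₊ : NNReal) : ℝ) / 2^k := by
        exact_mod_cast h1
      refine h4.trans ?_
      rw [div_le_iff₀ (by positivity)]
      rw [add_mul, inv_mul_cancel₀ (by positivity : ((2:ℝ)^k) ≠ 0)]
      exact h2
    refine tendsto_of_tendsto_of_tendsto_of_le_of_le tendsto_const_nhds ?_
      (fun k => by exact_mod_cast h_le_σk k ω) hup
    have : Tendsto (fun k : ℕ => ((2:ℝ)^k)⁻¹) atTop (𝓝 0) := by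
      simp_rw [← inv_pow]
      exact tendsto_pow_atTop_nhds_zero_of_lt_one (by norm_num) (by norm_num)
    simpa using tendsto_const_nhds.add this
  -- conditional expectation identities
  have hAk : ∀ k, MeasurableSet[(hst k).measurableSpace] A := fun k =>
    (IsStoppingTime.measurableSpace_mono hσ (hst k) (fun ω => WithTop.coe_le_coe.2 (h_le_σk k ω))) _ hA
  have hAm : MeasurableSet A := (hσ.measurableSpace_le_of_le (fun ω => WithTop.coe_le_coe.2 (hle ω))) _ hA
  have h_eq : ∀ k, stoppedValue X (fun ω => (σk k ω : WithTop NNReal)) =ᵐ[μ]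
      μ[X n | (hst k).measurableSpace] := fun k =>
    hmart.stoppedValue_ae_eq_condExp_of_le_const_of_countable_range (hst k) (fun ω => WithTop.coe_le_coe.2 (h_σk_le k ω))
      (by rw [show (fun ω => ((σk k ω : NNReal) : WithTop NNReal)) = (fun x : NNReal => (x : WithTop NNReal)) ∘ σk k from rfl, Set.range_comp]; exact (hcr k).image _)
  have h_int : ∀ k, ∫ ω in A, (μ[X n | (hst k).measurableSpace]) ω ∂μ
      = ∫ ω in A, X n ω ∂μ := fun k =>
    setIntegral_condExp ((hst k).measurableSpace_le_of_le (fun ω => WithTop.coe_le_coe.2 (h_σk_le k ω)))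
      (hmart.integrable n) (hAk k)
  set g : Ω → ℝ := fun ω => X (σ ω) ω with hgdef
  have hg_sm : StronglyMeasurable[ℱ n] g :=
    stronglyMeasurable_stoppedValue_of_le hprog hσ (fun ω => WithTop.coe_le_coe.2 (hle ω))
  have hg_meas : AEStronglyMeasurable g μ := (hg_sm.mono (ℱ.le n)).aestronglyMeasurable
  have hg_mem : MemLp g 1 μ :=
    MemLp.of_bound hg_meas C (hbdd.mono fun ω h => by rwa [Real.norm_eq_abs])
  set G : ℕ → Ω → ℝ := fun k => μ[X n | (hst k).measurableSpace] with hGdef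
  have hG_meas : ∀ k, AEStronglyMeasurable (G k) μ := fun k =>
    (stronglyMeasurable_condExp.mono ((hst k).measurableSpace_le_of_le (fun ω => WithTop.coe_le_coe.2 (h_σk_le k ω)))).aestronglyMeasurable
  have hUI : UnifIntegrable G 1 μ :=
    ((hmart.integrable n).uniformIntegrable_condExp
      fun k => (hst k).measurableSpace_le_of_le (fun ω => WithTop.coe_le_coe.2 (h_σk_le k ω))).2.1
  have h_tendae : ∀ᵐ ω ∂μ, Tendsto (fun k => G k ω) atTop (𝓝 (g ω)) := by
    have hall : ∀ᵐ ω ∂μ, ∀ k, G k ω = stoppedValue X (fun ω => (σk k ω : WithTop NNReal)) ω :=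
      ae_all_iff.2 fun k => (h_eq k).symm
    filter_upwards [hall] with ω hω
    have h1 : Tendsto (fun k => stoppedValue X (fun ω => (σk k ω : WithTop NNReal)) ω) atTop (𝓝 (g ω)) :=
      (((hcont ω).tendsto (σ ω)).comp (h_tend ω))
    exact h1.congr fun k => (hω k).symm
  have hL1 : Tendsto (fun k => eLpNorm (G k - g) 1 μ) atTop (𝓝 0) :=
    tendsto_Lp_finite_of_tendsto_ae le_rfl ENNReal.one_ne_top hG_meas hg_mem hUI h_tendae
  have hset : Tendsto (fun k => ∫ ω in A, G k ω ∂μ) atTop (𝓝 (∫ ω in A, g ω ∂μ)) :=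
    tendsto_setIntegral_of_L1' g (memLp_one_iff_integrable.1 hg_mem).aestronglyMeasurable
      (Filter.Eventually.of_forall fun k => integrable_condExp) hL1 A
  have hconst : Tendsto (fun _ : ℕ => ∫ ω in A, X n ω ∂μ) atTop (𝓝 (∫ ω in A, X n ω ∂μ)) :=
    tendsto_const_nhds
  have : ∫ ω in A, g ω ∂μ = ∫ ω in A, X n ω ∂μ := by
    refine tendsto_nhds_unique ?_ hconst
    exact hset.congr fun k => (h_int k)
  exact this

end Key

section Trunc
variable {Ω : Type*}

/-- `T_c ∧ T_0`. -/
noncomputable def tauMin (X : NNReal → Ω → ℝ) (c : ℝ) (ω : Ω) : ENNReal :=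
  min (hitT X c ω) (hitT X 0 ω)

/-- `(T_c ∧ T_0) ∧ n` as an `NNReal`-valued random time. -/
noncomputable def truncST (X : NNReal → Ω → ℝ) (c : ℝ) (n : NNReal) (ω : Ω) : NNReal :=
  (min (tauMin X c ω) n).toNNReal

lemma ennreal_toNNReal_le_iff {x : ENNReal} (hx : x ≠ ⊤) {t : NNReal} :
    x.toNNReal ≤ t ↔ x ≤ (t : ENNReal) := by
  constructor
  · intro h
    rw [← ENNReal.coe_toNNReal hx]
    exact_mod_cast h
  · intro h
    have := ENNReal.toNNReal_mono (by simp) h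
    simpa using this

lemma truncST_le {X : NNReal → Ω → ℝ} {c : ℝ} {n : NNReal} (ω : Ω) : truncST X c n ω ≤ n := by
  rw [truncST, ennreal_toNNReal_le_iff (by simp : min (tauMin X c ω) (n:ENNReal) ≠ ⊤)]
  exact min_le_right _ _

lemma coe_truncST_le {X : NNReal → Ω → ℝ} {c : ℝ} {n : NNReal} (ω : Ω) :
    (truncST X c n ω : ENNReal) ≤ tauMin X c ω :=
  le_trans ENNReal.coe_toNNReal_le_self (min_le_left _ _)

lemma truncST_le_coe_iff {X : NNReal → Ω → ℝ} {c : ℝ} {n : NNReal} {ω : Ω} {t : NNReal} :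
    truncST X c n ω ≤ t ↔ min (tauMin X c ω) (n : ENNReal) ≤ (t : ENNReal) :=
  ennreal_toNNReal_le_iff (by simp)

variable {m : MeasurableSpace Ω} {ℱ : Filtration NNReal m}

lemma measurableSet_tauMin_le {X : NNReal → Ω → ℝ} (hadp : StronglyAdapted ℱ X)
    (hcont : ∀ ω, Continuous fun t => X t ω) (c : ℝ) (t : NNReal) :
    MeasurableSet[ℱ t] {ω | tauMin X c ω ≤ (t : ENNReal)} := by
  have hset : {ω | tauMin X c ω ≤ (t : ENNReal)} =
      {ω | ∃ s : NNReal, s ≤ t ∧ X s ω = c} ∪ {ω | ∃ s : NNReal, s ≤ t ∧ X s ω = 0} := by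
    ext ω
    simp only [Set.mem_setOf_eq, Set.mem_union, tauMin, min_le_iff]
    rw [hitT_le_coe_iff (hcont ω), hitT_le_coe_iff (hcont ω)]
  rw [hset]
  exact (measurableSet_hit_event hadp hcont c t).union (measurableSet_hit_event hadp hcont 0 t)

lemma isStoppingTime_truncST {X : NNReal → Ω → ℝ} (hadp : StronglyAdapted ℱ X)
    (hcont : ∀ ω, Continuous fun t => X t ω) (c : ℝ) (n : NNReal) :
    IsStoppingTime ℱ (fun ω => (truncST X c n ω : WithTop NNReal)) := by
  intro t
  simp only [WithTop.coe_le_coe]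
  by_cases hnt : n ≤ t
  · have : {ω | truncST X c n ω ≤ t} = Set.univ :=
      Set.eq_univ_of_forall fun ω => (truncST_le ω).trans hnt
    rw [this]; exact MeasurableSet.univ
  · have : {ω | truncST X c n ω ≤ t} = {ω | tauMin X c ω ≤ (t : ENNReal)} := by
      ext ω
      rw [Set.mem_setOf_eq, truncST_le_coe_iff, Set.mem_setOf_eq, min_le_iff]
      simp only [ENNReal.coe_le_coe, or_iff_left hnt]
    rw [this]
    exact measurableSet_tauMin_le hadp hcont c t

/-- The event `{T_c ∧ T_0 ≤ n}` belongs to the stopping σ-algebra of the truncated time. -/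
lemma tauMin_le_mem_truncST_measurableSpace {X : NNReal → Ω → ℝ} (hadp : StronglyAdapted ℱ X)
    (hcont : ∀ ω, Continuous fun t => X t ω) (c : ℝ) (n : NNReal) :
    MeasurableSet[(isStoppingTime_truncST hadp hcont c n).measurableSpace]
      {ω | tauMin X c ω ≤ (n : ENNReal)} := by
  rw [IsStoppingTime.measurableSet]
  refine ⟨le_iSup ℱ n _ (measurableSet_tauMin_le hadp hcont c n), fun t => ?_⟩
  simp only [WithTop.coe_le_coe]
  by_cases hnt : n ≤ t
  · have : {ω | tauMin X c ω ≤ (n:ENNReal)} ∩ {ω | truncST X c n ω ≤ t}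
        = {ω | tauMin X c ω ≤ (n:ENNReal)} := by
      refine Set.inter_eq_left.2 fun ω _ => ?_
      exact (truncST_le ω).trans hnt
    rw [this]
    exact ℱ.mono hnt _ (measurableSet_tauMin_le hadp hcont c n)
  · push_neg at hnt
    have : {ω | tauMin X c ω ≤ (n:ENNReal)} ∩ {ω | truncST X c n ω ≤ t}
        = {ω | tauMin X c ω ≤ (t:ENNReal)} := by
      ext ω
      rw [Set.mem_inter_iff, Set.mem_setOf_eq, Set.mem_setOf_eq, Set.mem_setOf_eq,
        truncST_le_coe_iff, min_le_iff]
      constructor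
      · rintro ⟨_, h | h⟩
        · exact h
        · exact absurd (ENNReal.coe_le_coe.1 h) (not_le.2 hnt)
      · intro h
        exact ⟨h.trans (by exact_mod_cast hnt.le), Or.inl h⟩
    rw [this]
    exact measurableSet_tauMin_le hadp hcont c t

end Trunc

section PathMeas
variable {Ω : Type*}

/-- The stopping time representing the value of the stopped path at time `t`. -/
noncomputable def pathST (X : NNReal → Ω → ℝ) (a : ℝ) (t : NNReal) (ω : Ω) : NNReal :=
  if tauMin X a ω = ⊤ then t else min t ((tauMin X a ω).toNNReal)

lemma pathST_le {X : NNReal → Ω → ℝ} {a : ℝ} {t : NNReal} (ω : Ω) : pathST X a t ω ≤ t := by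
  rw [pathST]; split
  · exact le_rfl
  · exact min_le_left _ _

lemma stoppedPath_coord {X : NNReal → Ω → ℝ} {a : ℝ} (t : NNReal) (ω : Ω) :
    stoppedPath X a ω t = X (pathST X a t ω) ω := by
  rw [stoppedPath, pathST]
  rcases eq_or_ne (tauMin X a ω) ⊤ with h | h
  · rw [if_pos h]
    have : (t : ENNReal) ≤ min (hitT X a ω) (hitT X 0 ω) := by
      rw [show min (hitT X a ω) (hitT X 0 ω) = tauMin X a ω from rfl, h]; exact le_top
    rw [if_pos this]
  · rw [if_neg h]
    by_cases hle : (t : ENNReal) ≤ min (hitT X a ω) (hitT X 0 ω)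
    · rw [if_pos hle]
      have ht : t ≤ (tauMin X a ω).toNNReal := by
        have := ENNReal.toNNReal_mono h hle
        simpa using this
      rw [min_eq_left ht]
    · rw [if_neg hle]
      have hlt : tauMin X a ω ≤ (t : ENNReal) := (not_le.1 hle).le
      have : (tauMin X a ω).toNNReal ≤ t := (ennreal_toNNReal_le_iff h).2 hlt
      rw [min_eq_right this]
      rfl

lemma pathST_eq_of_le {X : NNReal → Ω → ℝ} {a : ℝ} {t n : NNReal} {ω : Ω}
    (h : tauMin X a ω ≤ (n : ENNReal)) :
    pathST X a t ω = min (truncST X a n ω) t := by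
  have hne : tauMin X a ω ≠ ⊤ := (h.trans_lt ENNReal.coe_lt_top).ne
  rw [pathST, if_neg hne, truncST, min_eq_left h, min_comm]

lemma isStoppingTime_pathST {m : MeasurableSpace Ω} {ℱ : Filtration NNReal m}
    {X : NNReal → Ω → ℝ} (hadp : StronglyAdapted ℱ X)
    (hcont : ∀ ω, Continuous fun t => X t ω) (a : ℝ) (t : NNReal) :
    IsStoppingTime ℱ (fun ω => (pathST X a t ω : WithTop NNReal)) := by
  intro s
  simp only [WithTop.coe_le_coe]
  by_cases hts : t ≤ s
  · have : {ω | pathST X a t ω ≤ s} = Set.univ :=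
      Set.eq_univ_of_forall fun ω => (pathST_le ω).trans hts
    rw [this]; exact MeasurableSet.univ
  · have : {ω | pathST X a t ω ≤ s} = {ω | tauMin X a ω ≤ (s : ENNReal)} := by
      ext ω
      rw [Set.mem_setOf_eq, Set.mem_setOf_eq, pathST]
      rcases eq_or_ne (tauMin X a ω) ⊤ with h | h
      · rw [if_pos h, h]
        simp only [top_le_iff, ENNReal.coe_ne_top, iff_false]
        exact fun hc => hts (hc.trans (le_refl s)) |>.elim
      · rw [if_neg h, min_le_iff, or_iff_right hts, ennreal_toNNReal_le_iff h]
    rw [this]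
    exact measurableSet_tauMin_le hadp hcont a s

end PathMeas

section Rel
variable {Ω : Type*}

/-- The σ-algebra of sets whose trace on `T` is `M`-measurable. -/
def relSpace (M : MeasurableSpace Ω) (T : Set Ω) (hT : MeasurableSet[M] T) :
    MeasurableSpace Ω where
  MeasurableSet' A := MeasurableSet[M] (A ∩ T)
  measurableSet_empty := show MeasurableSet[M] (∅ ∩ T) by simp
  measurableSet_compl := fun A hA => show MeasurableSet[M] (Aᶜ ∩ T) by
    have heq : Aᶜ ∩ T = T \ (A ∩ T) := by
      ext ω; simp only [Set.mem_inter_iff, Set.mem_compl_iff, Set.mem_diff]; tauto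
    rw [heq]; exact hT.diff hA
  measurableSet_iUnion := fun f hf => show MeasurableSet[M] ((⋃ i, f i) ∩ T) by
    rw [Set.iUnion_inter]; exact MeasurableSet.iUnion hf

lemma relSpace_measurableSet {M : MeasurableSpace Ω} {T : Set Ω} {hT : MeasurableSet[M] T}
    {A : Set Ω} (h : MeasurableSet[relSpace M T hT] A) : MeasurableSet[M] (A ∩ T) := h

variable {m : MeasurableSpace Ω} {ℱ : Filtration NNReal m} {X : NNReal → Ω → ℝ}

/-- The σ-algebra generated by the stopped path is contained in `m` and in each
relative stopping σ-algebra. -/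
lemma comap_stoppedPath_le (hadp : StronglyAdapted ℱ X)
    (hcont : ∀ ω, Continuous fun t => X t ω) (a : ℝ) :
    MeasurableSpace.comap (stoppedPath X a) MeasurableSpace.pi ≤
      m ⊓ ⨅ n : ℕ, relSpace (isStoppingTime_truncST hadp hcont a (n : NNReal)).measurableSpace
        {ω | tauMin X a ω ≤ ((n : NNReal) : ENNReal)}
        (tauMin_le_mem_truncST_measurableSpace hadp hcont a (n : NNReal)) := by
  have hprog : ProgMeasurable ℱ X := hadp.progMeasurable_of_continuous hcont
  rw [show (MeasurableSpace.pi : MeasurableSpace (NNReal → ℝ))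
      = ⨆ t : NNReal, MeasurableSpace.comap (fun g : NNReal → ℝ => g t) inferInstance from rfl,
    MeasurableSpace.comap_iSup]
  refine iSup_le fun t => ?_
  rw [MeasurableSpace.comap_comp]
  rintro A ⟨B, hB, rfl⟩
  show MeasurableSet[_ ⊓ _] (((fun g : NNReal → ℝ => g t) ∘ stoppedPath X a) ⁻¹' B)
  have hcomp : ((fun g : NNReal → ℝ => g t) ∘ stoppedPath X a) ⁻¹' B
      = (fun ω => stoppedPath X a ω t) ⁻¹' B := rfl
  rw [hcomp]
  rw [MeasurableSpace.measurableSet_inf, MeasurableSpace.measurableSet_iInf]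
  constructor
  · -- measurable w.r.t. m
    have h1 : Measurable[(isStoppingTime_pathST hadp hcont a t).measurableSpace]
        (stoppedValue X (fun ω => (pathST X a t ω : WithTop NNReal))) :=
      measurable_stoppedValue hprog (isStoppingTime_pathST hadp hcont a t)
    have h2 := ((isStoppingTime_pathST hadp hcont a t).measurableSpace_le_of_le
      (fun ω => WithTop.coe_le_coe.2 (pathST_le ω))) _ (h1 hB)
    have hcoord : (fun ω => stoppedPath X a ω t) ⁻¹' B = stoppedValue X (fun ω => (pathST X a t ω : WithTop NNReal)) ⁻¹' B := by
      have : (fun ω => stoppedPath X a ω t) = stoppedValue X (fun ω => (pathST X a t ω : WithTop NNReal)) := by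
        funext ω; exact stoppedPath_coord t ω
      rw [this]
    rw [hcoord]
    exact h2
  · intro n
    -- measurable w.r.t. the relative space
    show MeasurableSet[(isStoppingTime_truncST hadp hcont a (n:NNReal)).measurableSpace]
      ((fun ω => stoppedPath X a ω t) ⁻¹' B ∩ {ω | tauMin X a ω ≤ ((n:NNReal) : ENNReal)})
    set σn := truncST X a (n : NNReal) with hσn
    have hstn := isStoppingTime_truncST hadp hcont a (n : NNReal)
    have hmin : Measurable[(hstn.min_const t).measurableSpace]
        (stoppedValue X fun ω => min ((σn ω : NNReal) : WithTop NNReal) (t : WithTop NNReal)) :=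
      measurable_stoppedValue hprog (hstn.min_const t)
    have hle : (hstn.min_const t).measurableSpace ≤ hstn.measurableSpace :=
      IsStoppingTime.measurableSpace_mono _ hstn fun ω => min_le_left _ _
    have hmin' : Measurable[hstn.measurableSpace] (stoppedValue X fun ω => min ((σn ω : NNReal) : WithTop NNReal) (t : WithTop NNReal)) :=
      fun s hs => hle _ (hmin hs)
    have hseteq : (fun ω => stoppedPath X a ω t) ⁻¹' B
          ∩ {ω | tauMin X a ω ≤ ((n:NNReal) : ENNReal)}
        = (stoppedValue X fun ω => min ((σn ω : NNReal) : WithTop NNReal) (t : WithTop NNReal)) ⁻¹' B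
          ∩ {ω | tauMin X a ω ≤ ((n:NNReal) : ENNReal)} := by
      ext ω
      simp only [Set.mem_inter_iff, Set.mem_preimage, Set.mem_setOf_eq]
      refine and_congr_left fun hτ => ?_
      rw [stoppedPath_coord t ω, stoppedValue, pathST_eq_of_le hτ, ← WithTop.coe_min]
      exact Iff.rfl
    rw [hseteq]
    exact (hmin' hB).inter (tauMin_le_mem_truncST_measurableSpace hadp hcont a (n : NNReal))

end Rel


open Filter Topology

/-- Consistency of the upward conditioned measures: for a nonnegative continuous
martingale `X` with `X₀ = 1` a.s., absorbed at `0`, and `1 < a < b` with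
`P(T_b ∧ T_0 < ∞) = 1`, the measures `P(· | T_b ≤ T_0)` and `P(· | T_a ≤ T_0)` agree on
the σ-algebra generated by `X` stopped at `T_a ∧ T_0`. -/
theorem upward_conditioning_consistent
    {Ω : Type*} {m : MeasurableSpace Ω} {μ : Measure Ω} [IsProbabilityMeasure μ]
    {ℱ : Filtration NNReal m} {X : NNReal → Ω → ℝ}
    (hmart : Martingale X ℱ μ)
    (hcont : ∀ ω, Continuous fun t => X t ω)
    (hnonneg : ∀ t ω, 0 ≤ X t ω)
    (h0 : ∀ᵐ ω ∂μ, X 0 ω = 1)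
    (habs : ∀ ω (s t : NNReal), s ≤ t → X s ω = 0 → X t ω = 0)
    (a b : ℝ) (ha : 1 < a) (hab : a < b)
    (hfin : μ {ω | min (hitT X b ω) (hitT X 0 ω) < ⊤} = 1) :
    ∀ A : Set Ω,
      MeasurableSet[MeasurableSpace.comap (stoppedPath X a) inferInstance] A →
      μ[|{ω | hitT X b ω ≤ hitT X 0 ω}] A = μ[|{ω | hitT X a ω ≤ hitT X 0 ω}] A := by
  intro A hA
  have hadp := hmart.stronglyAdapted
  have hprog : ProgMeasurable ℱ X := hadp.progMeasurable_of_continuous hcont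
  set Sa := {ω | hitT X a ω ≤ hitT X 0 ω} with hSa_def
  set Sb := {ω | hitT X b ω ≤ hitT X 0 ω} with hSb_def
  -- basic measurability of hitting events in m
  have hhit_meas : ∀ (c : ℝ) (t : NNReal), MeasurableSet {ω | hitT X c ω ≤ (t : ENNReal)} := by
    intro c t
    have : {ω | hitT X c ω ≤ (t : ENNReal)} = {ω | ∃ s : NNReal, s ≤ t ∧ X s ω = c} := by
      ext ω; exact hitT_le_coe_iff (hcont ω)
    rw [this]
    exact ℱ.le t _ (measurableSet_hit_event hadp hcont c t)
  have hτ_meas : ∀ (c : ℝ) (t : NNReal), MeasurableSet {ω | tauMin X c ω ≤ (t : ENNReal)} :=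
    fun c t => ℱ.le t _ (measurableSet_tauMin_le hadp hcont c t)
  -- measurability of S_a and S_b
  have hS_meas : ∀ c : ℝ, MeasurableSet {ω | hitT X c ω ≤ hitT X 0 ω} := by
    intro c
    rw [← compl_compl {ω | hitT X c ω ≤ hitT X 0 ω}]
    refine MeasurableSet.compl ?_
    have : {ω | hitT X c ω ≤ hitT X 0 ω}ᶜ = ⋃ q : ℚ,
        ({ω | hitT X 0 ω ≤ ((Real.toNNReal q : NNReal) : ENNReal)}
          \ {ω | hitT X c ω ≤ ((Real.toNNReal q : NNReal) : ENNReal)}) := by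
      ext ω
      simp only [Set.mem_compl_iff, Set.mem_setOf_eq, not_le, Set.mem_iUnion, Set.mem_diff,
        Set.mem_setOf_eq, not_le]
      constructor
      · intro h
        obtain ⟨q, _, h1, h2⟩ := ENNReal.lt_iff_exists_rat_btwn.1 h
        exact ⟨q, h1.le, h2⟩
      · rintro ⟨q, h1, h2⟩
        exact h1.trans_lt h2
    rw [this]
    exact MeasurableSet.iUnion fun q => (hhit_meas 0 _).diff (hhit_meas c _)
  have hSa_meas : MeasurableSet Sa := hS_meas a
  have hSb_meas : MeasurableSet Sb := hS_meas b
  -- a.e. finiteness of τ_b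
  have hτb_set_meas : MeasurableSet {ω | tauMin X b ω < ⊤} := by
    have : {ω | tauMin X b ω < ⊤} = ⋃ n : ℕ, {ω | tauMin X b ω ≤ ((n : NNReal) : ENNReal)} := by
      ext ω
      simp only [Set.mem_setOf_eq, Set.mem_iUnion]
      constructor
      · intro h
        obtain ⟨n, hn⟩ := ENNReal.exists_nat_gt h.ne
        exact ⟨n, by exact_mod_cast hn.le⟩
      · rintro ⟨n, hn⟩
        exact hn.trans_lt (by exact_mod_cast ENNReal.coe_lt_top)
    rw [this]
    exact MeasurableSet.iUnion fun n => hτ_meas b _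
  have hτb_fin : ∀ᵐ ω ∂μ, tauMin X b ω < ⊤ := by
    rw [ae_iff]
    have : {ω | ¬ tauMin X b ω < ⊤} = {ω | tauMin X b ω < ⊤}ᶜ := by ext ω; simp
    rw [this, prob_compl_eq_zero_iff hτb_set_meas]
    exact hfin
  -- pathwise a.e. facts
  have hτab : ∀ᵐ ω ∂μ, tauMin X a ω ≤ tauMin X b ω := by
    filter_upwards [h0] with ω hω
    exact min_le_min (hitT_mono_level (hcont ω) (hω.le.trans ha.le) hab.le) le_rfl
  have hτa_fin : ∀ᵐ ω ∂μ, tauMin X a ω < ⊤ := by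
    filter_upwards [hτab, hτb_fin] with ω h1 h2 using h1.trans_lt h2
  have hXbd : ∀ c : ℝ, 1 ≤ c → ∀ᵐ ω ∂μ, ∀ t : NNReal,
      (t : ENNReal) ≤ tauMin X c ω → X t ω ≤ c := by
    intro c hc
    filter_upwards [h0] with ω hω t ht
    exact le_of_le_hitT (hcont ω) (hω.le.trans hc) (ht.trans (min_le_left _ _))
  have hXbd_a := hXbd a ha.le
  have hXbd_b := hXbd b (ha.trans hab).le
  -- the stopping times
  set σn : ℕ → Ω → NNReal := fun n => truncST X a (n : NNReal) with hσn_def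
  set ρ0n : ℕ → Ω → NNReal := fun n => truncST X b (n : NNReal) with hρ0n_def
  set ρn : ℕ → Ω → NNReal := fun n ω => max (σn n ω) (ρ0n n ω) with hρn_def
  have hstσ : ∀ n : ℕ, IsStoppingTime ℱ (fun ω => (σn n ω : WithTop NNReal)) :=
    fun n => isStoppingTime_truncST hadp hcont a (n : NNReal)
  have hstρ0 : ∀ n : ℕ, IsStoppingTime ℱ (fun ω => (ρ0n n ω : WithTop NNReal)) :=
    fun n => isStoppingTime_truncST hadp hcont b (n : NNReal)
  have hstρ : ∀ n : ℕ, IsStoppingTime ℱ (fun ω => (ρn n ω : WithTop NNReal)) := fun n => by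
    have h := (hstσ n).max (hstρ0 n); simp only [← WithTop.coe_max] at h; exact h
  have hσ_le : ∀ (n : ℕ) ω, σn n ω ≤ (n : NNReal) := fun n ω => truncST_le ω
  have hρ_le : ∀ (n : ℕ) ω, ρn n ω ≤ (n : NNReal) :=
    fun n ω => max_le (truncST_le ω) (truncST_le ω)
  -- bounds on stopped values
  have hbd_σ : ∀ n : ℕ, ∀ᵐ ω ∂μ, |X (σn n ω) ω| ≤ a := by
    intro n
    filter_upwards [hXbd_a] with ω hω
    rw [abs_of_nonneg (hnonneg _ _)]
    exact hω _ (coe_truncST_le ω)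
  have hbd_ρ : ∀ n : ℕ, ∀ᵐ ω ∂μ, |X (ρn n ω) ω| ≤ b := by
    intro n
    filter_upwards [hXbd_b, hτab] with ω hω hab'
    rw [abs_of_nonneg (hnonneg _ _)]
    refine hω _ ?_
    have h1 : ((σn n ω : NNReal) : ENNReal) ≤ tauMin X b ω := (coe_truncST_le ω).trans hab'
    have h2 : ((ρ0n n ω : NNReal) : ENNReal) ≤ tauMin X b ω := coe_truncST_le ω
    have : ((max (σn n ω) (ρ0n n ω) : NNReal) : ENNReal)
        = max ((σn n ω : NNReal) : ENNReal) ((ρ0n n ω : NNReal) : ENNReal) := by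
      exact_mod_cast rfl
    rw [hρn_def]
    simp only []
    rw [this]
    exact max_le h1 h2
  -- eventual values of the stopping times
  have heva : ∀ (n : ℕ) ω, tauMin X a ω ≤ ((n : NNReal) : ENNReal) →
      σn n ω = (tauMin X a ω).toNNReal := by
    intro n ω h
    rw [hσn_def]
    simp only [truncST]
    rw [min_eq_left h]
  have hevρ : ∀ (n : ℕ) ω, tauMin X a ω ≤ tauMin X b ω →
      tauMin X b ω ≤ ((n : NNReal) : ENNReal) →
      ρn n ω = (tauMin X b ω).toNNReal := by
    intro n ω hab' h
    rw [hρn_def]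
    simp only []
    rw [heva n ω (hab'.trans h)]
    have : ρ0n n ω = (tauMin X b ω).toNNReal := by
      rw [hρ0n_def]; simp only [truncST]; rw [min_eq_left h]
    rw [this, max_eq_right]
    exact ENNReal.toNNReal_mono (h.trans_lt ENNReal.coe_lt_top).ne hab'
  -- identification of the limiting stopped values
  have hid : ∀ c : ℝ, 0 < c → (∀ᵐ ω ∂μ, tauMin X c ω < ⊤) →
      ∀ᵐ ω ∂μ, X ((tauMin X c ω).toNNReal) ω
        = Set.indicator {ω | hitT X c ω ≤ hitT X 0 ω} (fun _ => c) ω := by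
    intro c hc hτfin
    filter_upwards [hτfin] with ω hfinω
    by_cases hmem : ω ∈ {ω | hitT X c ω ≤ hitT X 0 ω}
    · rw [Set.indicator_of_mem hmem]
      have hτ : tauMin X c ω = hitT X c ω := min_eq_left hmem
      have hne : hitT X c ω ≠ ⊤ := by rw [← hτ]; exact hfinω.ne
      obtain ⟨s, hs, hXs⟩ := hitT_attained (hcont ω) hne
      have : (tauMin X c ω).toNNReal = s := by
        rw [hτ, ← hs]; simp
      rw [this, hXs]
    · rw [Set.indicator_of_notMem hmem]
      have hlt : hitT X 0 ω < hitT X c ω := not_le.1 hmem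
      have hτ : tauMin X c ω = hitT X 0 ω := min_eq_right hlt.le
      have hne : hitT X 0 ω ≠ ⊤ := by rw [← hτ]; exact hfinω.ne
      obtain ⟨s, hs, hXs⟩ := hitT_attained (hcont ω) hne
      have : (tauMin X c ω).toNNReal = s := by
        rw [hτ, ← hs]; simp
      rw [this, hXs]
  have hida := hid a (lt_trans zero_lt_one ha) hτa_fin
  have hidb := hid b (lt_trans zero_lt_one (ha.trans hab)) hτb_fin
  -- integral of X at fixed times is 1
  have hInt_univ : ∀ n : ℕ, ∫ ω, X (n : NNReal) ω ∂μ = 1 := by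
    intro n
    have h01 : ∫ ω, X 0 ω ∂μ = 1 := by
      rw [integral_congr_ae (h0.mono fun ω hω => hω)]
      simp
    have hcond := hmart.condExp_ae_eq (zero_le (a := (n : NNReal)))
    calc ∫ ω, X (n : NNReal) ω ∂μ = ∫ ω, (μ[X (n : NNReal)|ℱ 0]) ω ∂μ :=
          (integral_condExp (ℱ.le 0)).symm
      _ = ∫ ω, X 0 ω ∂μ := integral_congr_ae hcond
      _ = 1 := h01
  -- total mass: ∫ X_{τ∧T0} = 1 for both levels
  have hone : ∀ (c : ℝ), 1 ≤ c →
      ∀ (τ : ℕ → Ω → NNReal), (∀ n, IsStoppingTime ℱ (fun ω => (τ n ω : WithTop NNReal))) →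
      (∀ (n : ℕ) ω, τ n ω ≤ (n : NNReal)) →
      (∀ n : ℕ, ∀ᵐ ω ∂μ, |X (τ n ω) ω| ≤ c) →
      (∀ᵐ ω ∂μ, Tendsto (fun n => X (τ n ω) ω) atTop (𝓝 (X ((tauMin X c ω).toNNReal) ω))) →
      ∫ ω, X ((tauMin X c ω).toNNReal) ω ∂μ = 1 := by
    intro c hc τ hst hτle hbd htend
    have hint : ∀ n : ℕ, ∫ ω, X (τ n ω) ω ∂μ = 1 := by
      intro n
      have := optional_sampling_aux hmart hcont (hst n) (hτle n) (hbd n)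
        (MeasurableSet.univ (α := Ω))
      rw [Measure.restrict_univ] at this
      rw [this]
      exact hInt_univ n
    have hmeas : ∀ n : ℕ, AEStronglyMeasurable (fun ω => X (τ n ω) ω) μ := fun n =>
      ((stronglyMeasurable_stoppedValue_of_le hprog (hst n) (fun ω => WithTop.coe_le_coe.2 (hτle n ω))).mono
        (ℱ.le _)).aestronglyMeasurable
    have hbd' : ∀ n : ℕ, ∀ᵐ ω ∂μ, ‖X (τ n ω) ω‖ ≤ c := by
      intro n; filter_upwards [hbd n] with ω hω; rwa [Real.norm_eq_abs]
    have hlim := tendsto_integral_of_dominated_convergence (fun _ => c)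
      hmeas (integrable_const c) hbd' htend
    have hconst : Tendsto (fun n : ℕ => ∫ ω, X (τ n ω) ω ∂μ) atTop (𝓝 1) := by
      simp_rw [hint]; exact tendsto_const_nhds
    exact (tendsto_nhds_unique hlim hconst)
  -- pointwise convergence of the stopped values
  have htend_σ : ∀ᵐ ω ∂μ, Tendsto (fun n => X (σn n ω) ω) atTop
      (𝓝 (X ((tauMin X a ω).toNNReal) ω)) := by
    filter_upwards [hτa_fin] with ω hfinω
    obtain ⟨N, hN⟩ := ENNReal.exists_nat_gt hfinω.ne
    refine tendsto_atTop_of_eventually_const (i₀ := N) fun n hn => ?_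
    have hτn : tauMin X a ω ≤ ((n : NNReal) : ENNReal) := by
      refine hN.le.trans ?_
      have : ((N : NNReal) : ENNReal) ≤ ((n : NNReal) : ENNReal) := by
        exact_mod_cast Nat.cast_le.2 hn
      simpa using this
    rw [heva n ω hτn]
  have htend_ρ : ∀ᵐ ω ∂μ, Tendsto (fun n => X (ρn n ω) ω) atTop
      (𝓝 (X ((tauMin X b ω).toNNReal) ω)) := by
    filter_upwards [hτb_fin, hτab] with ω hfinω habω
    obtain ⟨N, hN⟩ := ENNReal.exists_nat_gt hfinω.ne
    refine tendsto_atTop_of_eventually_const (i₀ := N) fun n hn => ?_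
    have hτn : tauMin X b ω ≤ ((n : NNReal) : ENNReal) := by
      refine hN.le.trans ?_
      have : ((N : NNReal) : ENNReal) ≤ ((n : NNReal) : ENNReal) := by
        exact_mod_cast Nat.cast_le.2 hn
      simpa using this
    rw [hevρ n ω habω hτn]
  have honea : ∫ ω, X ((tauMin X a ω).toNNReal) ω ∂μ = 1 :=
    hone a ha.le σn hstσ hσ_le hbd_σ htend_σ
  have honeb : ∫ ω, X ((tauMin X b ω).toNNReal) ω ∂μ = 1 :=
    hone b (ha.trans hab).le ρn hstρ hρ_le hbd_ρ htend_ρ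
  -- decompose the comap hypothesis
  have hA' := comap_stoppedPath_le hadp hcont a _ hA
  rw [MeasurableSpace.measurableSet_inf, MeasurableSpace.measurableSet_iInf] at hA'
  obtain ⟨hAm, hAn⟩ := hA'
  have hAn' : ∀ n : ℕ, MeasurableSet[(hstσ n).measurableSpace]
      (A ∩ {ω | tauMin X a ω ≤ ((n : NNReal) : ENNReal)}) := fun n =>
    relSpace_measurableSet (hAn n)
  -- the main set-integral identity
  have hmain : ∫ ω, A.indicator (fun ω => X ((tauMin X a ω).toNNReal) ω) ω ∂μ
      = ∫ ω, A.indicator (fun ω => X ((tauMin X b ω).toNNReal) ω) ω ∂μ := by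
    set An : ℕ → Set Ω := fun n => A ∩ {ω | tauMin X a ω ≤ ((n : NNReal) : ENNReal)} with hAn_def
    have hAnm : ∀ n : ℕ, MeasurableSet (An n) := fun n => hAm.inter (hτ_meas a _)
    have hAρ : ∀ n : ℕ, MeasurableSet[(hstρ n).measurableSpace] (An n) := fun n =>
      (IsStoppingTime.measurableSpace_mono (hstσ n) (hstρ n)
        fun ω => WithTop.coe_le_coe.2 (le_max_left _ _)) _ (hAn' n)
    have I1 : ∀ n : ℕ, ∫ ω in An n, X (σn n ω) ω ∂μ = ∫ ω in An n, X ((n : NNReal)) ω ∂μ :=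
      fun n => optional_sampling_aux hmart hcont (hstσ n) (hσ_le n) (hbd_σ n) (hAn' n)
    have I2 : ∀ n : ℕ, ∫ ω in An n, X (ρn n ω) ω ∂μ = ∫ ω in An n, X ((n : NNReal)) ω ∂μ :=
      fun n => optional_sampling_aux hmart hcont (hstρ n) (hρ_le n) (hbd_ρ n) (hAρ n)
    set Fn : ℕ → Ω → ℝ := fun n => (An n).indicator (fun ω => X (σn n ω) ω) with hFn_def
    set Gn : ℕ → Ω → ℝ := fun n => (An n).indicator (fun ω => X (ρn n ω) ω) with hGn_def
    have hFieq : ∀ n : ℕ, ∫ ω, Fn n ω ∂μ = ∫ ω in An n, X (σn n ω) ω ∂μ := fun n =>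
      integral_indicator (hAnm n)
    have hGieq : ∀ n : ℕ, ∫ ω, Gn n ω ∂μ = ∫ ω in An n, X (ρn n ω) ω ∂μ := fun n =>
      integral_indicator (hAnm n)
    have hF_meas : ∀ n : ℕ, AEStronglyMeasurable (Fn n) μ := fun n =>
      (((stronglyMeasurable_stoppedValue_of_le hprog (hstσ n) (fun ω => WithTop.coe_le_coe.2 (hσ_le n ω))).mono
        (ℱ.le _)).aestronglyMeasurable).indicator (hAnm n)
    have hG_meas : ∀ n : ℕ, AEStronglyMeasurable (Gn n) μ := fun n =>
      (((stronglyMeasurable_stoppedValue_of_le hprog (hstρ n) (fun ω => WithTop.coe_le_coe.2 (hρ_le n ω))).mono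
        (ℱ.le _)).aestronglyMeasurable).indicator (hAnm n)
    have hF_bd : ∀ n : ℕ, ∀ᵐ ω ∂μ, ‖Fn n ω‖ ≤ a := by
      intro n
      filter_upwards [hbd_σ n] with ω hω
      by_cases h : ω ∈ An n
      · rw [hFn_def]; simp only [Set.indicator_of_mem h, Real.norm_eq_abs]; exact hω
      · rw [hFn_def]; simp only [Set.indicator_of_notMem h, norm_zero]; linarith
    have hG_bd : ∀ n : ℕ, ∀ᵐ ω ∂μ, ‖Gn n ω‖ ≤ b := by
      intro n
      filter_upwards [hbd_ρ n] with ω hω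
      by_cases h : ω ∈ An n
      · rw [hGn_def]; simp only [Set.indicator_of_mem h, Real.norm_eq_abs]; exact hω
      · rw [hGn_def]; simp only [Set.indicator_of_notMem h, norm_zero]; linarith
    have hF_tend : ∀ᵐ ω ∂μ, Tendsto (fun n => Fn n ω) atTop
        (𝓝 (A.indicator (fun ω => X ((tauMin X a ω).toNNReal) ω) ω)) := by
      filter_upwards [hτa_fin] with ω hfinω
      by_cases hmemA : ω ∈ A
      · obtain ⟨N, hN⟩ := ENNReal.exists_nat_gt hfinω.ne
        refine tendsto_atTop_of_eventually_const (i₀ := N) fun n hn => ?_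
        have hτn : tauMin X a ω ≤ ((n : NNReal) : ENNReal) := by
          refine hN.le.trans ?_
          have : ((N : NNReal) : ENNReal) ≤ ((n : NNReal) : ENNReal) := by
            exact_mod_cast Nat.cast_le.2 hn
          simpa using this
        have hmemn : ω ∈ An n := ⟨hmemA, hτn⟩
        rw [hFn_def]
        simp only [Set.indicator_of_mem hmemn, Set.indicator_of_mem hmemA]
        rw [heva n ω hτn]
      · have hz : ∀ n : ℕ, Fn n ω = 0 := fun n =>
          Set.indicator_of_notMem (fun hc => hmemA hc.1) _
        rw [Set.indicator_of_notMem hmemA]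
        exact tendsto_const_nhds.congr fun n => (hz n).symm
    have hG_tend : ∀ᵐ ω ∂μ, Tendsto (fun n => Gn n ω) atTop
        (𝓝 (A.indicator (fun ω => X ((tauMin X b ω).toNNReal) ω) ω)) := by
      filter_upwards [hτa_fin, hτb_fin, hτab] with ω hfinω hfinbω habω
      by_cases hmemA : ω ∈ A
      · obtain ⟨N, hN⟩ := ENNReal.exists_nat_gt hfinbω.ne
        refine tendsto_atTop_of_eventually_const (i₀ := N) fun n hn => ?_
        have hτn : tauMin X b ω ≤ ((n : NNReal) : ENNReal) := by
          refine hN.le.trans ?_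
          have : ((N : NNReal) : ENNReal) ≤ ((n : NNReal) : ENNReal) := by
            exact_mod_cast Nat.cast_le.2 hn
          simpa using this
        have hmemn : ω ∈ An n := ⟨hmemA, habω.trans hτn⟩
        rw [hGn_def]
        simp only [Set.indicator_of_mem hmemn, Set.indicator_of_mem hmemA]
        rw [hevρ n ω habω hτn]
      · have hz : ∀ n : ℕ, Gn n ω = 0 := fun n =>
          Set.indicator_of_notMem (fun hc => hmemA hc.1) _
        rw [Set.indicator_of_notMem hmemA]
        exact tendsto_const_nhds.congr fun n => (hz n).symm
    have hFlim := tendsto_integral_of_dominated_convergence (fun _ => a)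
      hF_meas (integrable_const a) hF_bd hF_tend
    have hGlim := tendsto_integral_of_dominated_convergence (fun _ => b)
      hG_meas (integrable_const b) hG_bd hG_tend
    have hFGeq : ∀ n : ℕ, ∫ ω, Fn n ω ∂μ = ∫ ω, Gn n ω ∂μ := by
      intro n
      rw [hFieq n, hGieq n, I1 n, ← I2 n]
    exact tendsto_nhds_unique (hFlim.congr fun n => hFGeq n) hGlim
  -- identification with indicators
  have hmassa : a * (μ Sa).toReal = 1 := by
    have h1 : ∫ ω, X ((tauMin X a ω).toNNReal) ω ∂μ
        = ∫ ω, Sa.indicator (fun _ => a) ω ∂μ := integral_congr_ae hida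
    rw [h1, integral_indicator_const _ hSa_meas, smul_eq_mul] at honea
    rw [mul_comm]; exact honea
  have hmassb : b * (μ Sb).toReal = 1 := by
    have h1 : ∫ ω, X ((tauMin X b ω).toNNReal) ω ∂μ
        = ∫ ω, Sb.indicator (fun _ => b) ω ∂μ := integral_congr_ae hidb
    rw [h1, integral_indicator_const _ hSb_meas, smul_eq_mul] at honeb
    rw [mul_comm]; exact honeb
  have hArel : ∫ ω, A.indicator (fun ω => X ((tauMin X a ω).toNNReal) ω) ω ∂μ
      = (μ (A ∩ Sa)).toReal * a := by
    have h1 : A.indicator (fun ω => X ((tauMin X a ω).toNNReal) ω)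
        =ᵐ[μ] A.indicator (Sa.indicator fun _ => a) := by
      filter_upwards [hida] with ω hω
      by_cases h : ω ∈ A
      · rw [Set.indicator_of_mem h, Set.indicator_of_mem h, hω]
      · rw [Set.indicator_of_notMem h, Set.indicator_of_notMem h]
    rw [integral_congr_ae h1, Set.indicator_indicator,
      integral_indicator_const _ (hAm.inter hSa_meas), smul_eq_mul, measureReal_def]
  have hBrel : ∫ ω, A.indicator (fun ω => X ((tauMin X b ω).toNNReal) ω) ω ∂μ
      = (μ (A ∩ Sb)).toReal * b := by
    have h1 : A.indicator (fun ω => X ((tauMin X b ω).toNNReal) ω)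
        =ᵐ[μ] A.indicator (Sb.indicator fun _ => b) := by
      filter_upwards [hidb] with ω hω
      by_cases h : ω ∈ A
      · rw [Set.indicator_of_mem h, Set.indicator_of_mem h, hω]
      · rw [Set.indicator_of_notMem h, Set.indicator_of_notMem h]
    rw [integral_congr_ae h1, Set.indicator_indicator,
      integral_indicator_const _ (hAm.inter hSb_meas), smul_eq_mul, measureReal_def]
  have hkey : (μ (A ∩ Sa)).toReal * a = (μ (A ∩ Sb)).toReal * b := by
    rw [← hArel, ← hBrel]; exact hmain
  -- final arithmetic in ℝ≥0∞
  have ha0 : (0:ℝ) < a := lt_trans zero_lt_one ha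
  have hb0 : (0:ℝ) < b := lt_trans ha0 hab
  have hSaR : (μ Sa).toReal = 1 / a := by
    rw [eq_div_iff (ne_of_gt ha0), mul_comm]; exact hmassa
  have hSbR : (μ Sb).toReal = 1 / b := by
    rw [eq_div_iff (ne_of_gt hb0), mul_comm]; exact hmassb
  have hSa0 : μ Sa ≠ 0 := by
    intro h; rw [h] at hSaR
    simp only [ENNReal.toReal_zero] at hSaR
    have : (0:ℝ) < 1 / a := by positivity
    rw [← hSaR] at this; exact lt_irrefl _ this
  have hSb0 : μ Sb ≠ 0 := by
    intro h; rw [h] at hSbR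
    simp only [ENNReal.toReal_zero] at hSbR
    have : (0:ℝ) < 1 / b := by positivity
    rw [← hSbR] at this; exact lt_irrefl _ this
  rw [cond_apply hSb_meas μ A, cond_apply hSa_meas μ A]
  have hL : (μ Sb)⁻¹ * μ (Sb ∩ A) ≠ ⊤ :=
    ENNReal.mul_ne_top (ENNReal.inv_ne_top.2 hSb0) (measure_ne_top _ _)
  have hR : (μ Sa)⁻¹ * μ (Sa ∩ A) ≠ ⊤ :=
    ENNReal.mul_ne_top (ENNReal.inv_ne_top.2 hSa0) (measure_ne_top _ _)
  rw [← ENNReal.toReal_eq_toReal_iff' hL hR, ENNReal.toReal_mul, ENNReal.toReal_mul,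
    ENNReal.toReal_inv, ENNReal.toReal_inv, hSaR, hSbR, one_div, one_div, inv_inv, inv_inv,
    Set.inter_comm Sb A, Set.inter_comm Sa A]
  rw [mul_comm ((μ (A ∩ Sa)).toReal) a] at hkey
  rw [mul_comm ((μ (A ∩ Sb)).toReal) b] at hkey
  exact hkey.symm
end

section
/- Let X be a nonnegative P-martingale with X_0 = 1 that is uniformly integrable and satisfies P(X_∞ ∈ {0, 1/b}) = 1 for some b ∈ (0,1]. Then P(X_∞ = 1/b) = b, and the measure Q defined by dQ = X_∞ dP equals P conditioned on the event {X_∞ = 1/b}. -/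
open MeasureTheory ProbabilityTheory Filter

/-- Identity of measures, 'if' direction: if `X` is a uniformly integrable nonnegative
martingale with `X₀ = 1` and terminal value `X_∞` taking a.s. only the values `0` and
`1/b` for some `b ∈ (0,1]`, then `P(X_∞ = 1/b) = b` and the measure `dQ = X_∞ dP` equals
`P` conditioned on the event `{X_∞ = 1/b}`. -/
theorem ui_martingale_h_transform_eq_conditioning
    {Ω : Type*} {m : MeasurableSpace Ω} {μ : Measure Ω} [IsProbabilityMeasure μ]
    {ℱ : Filtration NNReal m} {X : NNReal → Ω → ℝ}
    (hmart : Martingale X ℱ μ)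
    (hnonneg : ∀ t ω, 0 ≤ X t ω)
    (hui : UniformIntegrable X 1 μ)
    (h0 : ∀ᵐ ω ∂μ, X 0 ω = 1)
    (b : ℝ) (hb0 : 0 < b) (hb1 : b ≤ 1)
    (Xinf : Ω → ℝ) (hXinfm : Measurable Xinf)
    (hconv : ∀ᵐ ω ∂μ, Tendsto (fun t => X t ω) atTop (nhds (Xinf ω)))
    (hvals : ∀ᵐ ω ∂μ, Xinf ω = 0 ∨ Xinf ω = 1 / b) :
    μ {ω | Xinf ω = 1 / b} = ENNReal.ofReal b
    ∧ μ.withDensity (fun ω => ENNReal.ofReal (Xinf ω))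
        = μ[|{ω | Xinf ω = 1 / b}] := by
  set A : Set Ω := {ω | Xinf ω = 1 / b} with hA
  have hAmeas : MeasurableSet A := hXinfm (measurableSet_singleton (1 / b))
  have hbinv : (0:ℝ) < 1 / b := by positivity
  -- Xinf is a.e. equal to the indicator of A with value 1/b
  have hind : Xinf =ᵐ[μ] A.indicator (fun _ => 1 / b) := by
    filter_upwards [hvals] with ω hω
    rcases hω with h | h
    · rw [Set.indicator_of_notMem, h]
      simp only [A, Set.mem_setOf_eq, h]
      exact fun hc => absurd hc.symm (ne_of_gt hbinv)
    · rw [Set.indicator_of_mem (by simpa [A] using h), h]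
  -- Xinf is integrable
  have hXinfInt : Integrable Xinf μ := by
    refine (MemLp.of_bound hXinfm.aestronglyMeasurable (1 / b) ?_).integrable le_rfl
    filter_upwards [hvals] with ω hω
    rcases hω with h | h
    · rw [h, norm_zero]; exact le_of_lt hbinv
    · rw [h, Real.norm_of_nonneg (le_of_lt hbinv)]
  -- each X t has integral 1
  have hint1 : ∀ t : NNReal, ∫ ω, X t ω ∂μ = 1 := by
    intro t
    have h1 : μ[X t | ℱ 0] =ᵐ[μ] X 0 := hmart.condExp_ae_eq (zero_le : (0 : NNReal) ≤ t)
    have h2 : ∫ ω, (μ[X t | ℱ 0]) ω ∂μ = ∫ ω, X t ω ∂μ := integral_condExp (ℱ.le 0)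
    rw [← h2, integral_congr_ae h1, integral_congr_ae h0]
    simp
  -- convergence of integrals via Vitali along the naturals
  have hNN : Tendsto (fun n : ℕ => (n : NNReal)) atTop atTop :=
    tendsto_natCast_atTop_atTop
  have hae : ∀ᵐ ω ∂μ, Tendsto (fun n : ℕ => X n ω) atTop (nhds (Xinf ω)) := by
    filter_upwards [hconv] with ω hω
    exact hω.comp hNN
  have hunif : UnifIntegrable (fun n : ℕ => X n) 1 μ := by
    intro ε hε
    obtain ⟨δ, hδ, hδ'⟩ := hui.2.1 hε
    exact ⟨δ, hδ, fun n s hs hsδ => hδ' n s hs hsδ⟩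
  have hL1 : Tendsto (fun n : ℕ => eLpNorm ((fun n : ℕ => X n) n - Xinf) 1 μ) atTop (nhds 0) :=
    tendsto_Lp_finite_of_tendsto_ae le_rfl ENNReal.one_ne_top
      (fun n => hui.1 n)
      (memLp_one_iff_integrable.mpr hXinfInt) hunif hae
  have hinttendsto : Tendsto (fun n : ℕ => ∫ ω, X n ω ∂μ) atTop (nhds (∫ ω, Xinf ω ∂μ)) :=
    tendsto_integral_of_L1' Xinf hXinfInt.aestronglyMeasurable
      (Eventually.of_forall fun n => hmart.integrable n) hL1
  have hXinfint1 : ∫ ω, Xinf ω ∂μ = 1 := by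
    have : Tendsto (fun _ : ℕ => (1 : ℝ)) atTop (nhds (∫ ω, Xinf ω ∂μ)) := by
      simpa [hint1] using hinttendsto
    exact tendsto_nhds_unique this tendsto_const_nhds
  -- compute μ A
  have hfin : μ A ≠ ⊤ := measure_ne_top μ A
  have htoReal : (μ A).toReal = b := by
    have : ∫ ω, Xinf ω ∂μ = (μ A).toReal * (1 / b) := by
      rw [integral_congr_ae hind, integral_indicator_const _ hAmeas]
      simp [mul_comm, measureReal_def]
    rw [hXinfint1] at this
    field_simp at this
    linarith
  have hmuA : μ A = ENNReal.ofReal b := by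
    rw [← htoReal, ENNReal.ofReal_toReal hfin]
  refine ⟨hmuA, ?_⟩
  -- measure identity
  have hindE : (fun ω => ENNReal.ofReal (Xinf ω))
      =ᵐ[μ] A.indicator (fun _ => ENNReal.ofReal (1 / b)) := by
    filter_upwards [hind] with ω hω
    rw [hω]
    by_cases h : ω ∈ A <;> simp [h]
  rw [withDensity_congr_ae hindE, withDensity_indicator hAmeas, withDensity_const,
    ProbabilityTheory.cond, hmuA, ← ENNReal.ofReal_inv_of_pos hb0, one_div]
end
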